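/- arXiv:math/0208149 — 2 statements merged into one kernel-verified Lean document; each statement's English description precedes it below -/
import Mathlib

section
/- Let K and K' be simplicial complexes (geometric simplicial complexes in real vector spaces) with polyhedra |K| and |K'|, let L and L' be topological spaces, and let h : |K| → |K'|, g : L → L', α : L → |K|, α' : L' → |K'| be continuous maps such that h, g, α, α' combinatorially commute and h is combinatorial. Then for every point x ∈ |K| one has g(α⁻¹(st(x))) ⊆ α'⁻¹(st(h(x))), where st denotes the star in K and in K' respectively. -/
open Set

/-- The star `st(x)` of a point `x` in (the polyhedron of) a simplicial complex `K`:
the union of all closed simplexes of `K` containing `x`. -/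
def SimplicialStar {𝕜 E : Type*} [Ring 𝕜] [PartialOrder 𝕜] [IsOrderedRing 𝕜] [AddCommGroup E] [Module 𝕜 E]
    (K : Geometry.SimplicialComplex 𝕜 E) (x : E) : Set E :=
  ⋃ σ ∈ {σ ∈ K.faces | x ∈ convexHull 𝕜 (σ : Set E)}, convexHull 𝕜 (σ : Set E)

/-- A map `h : |K| → |K'|` between the polyhedra of simplicial complexes is
combinatorial if the preimage of every closed simplex of `K'` is a union of
closed simplexes of `K`. -/
def IsCombinatorialMap {E F : Type*} [AddCommGroup E] [Module ℝ E]
    [AddCommGroup F] [Module ℝ F]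
    (K : Geometry.SimplicialComplex ℝ E) (K' : Geometry.SimplicialComplex ℝ F)
    (h : K.space → K'.space) : Prop :=
  ∀ Δ' ∈ K'.faces, ∃ S ⊆ K.faces,
    {x : E | ∃ hx : x ∈ K.space, ((h ⟨x, hx⟩ : F) ∈ convexHull ℝ (Δ' : Set F))} =
      ⋃ σ ∈ S, convexHull ℝ (σ : Set E)

/-- Maps `h : |K| → |K'|`, `g : L → L'`, `α : L → |K|`, `α' : L' → |K'|`
combinatorially commute if for every face `Δ` of `K'` we have
`(α' ∘ g)((h ∘ α)⁻¹(conv Δ)) ⊆ conv Δ`. -/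
def CombinatoriallyCommute {E F L L' : Type*} [AddCommGroup E] [Module ℝ E]
    [AddCommGroup F] [Module ℝ F]
    (K : Geometry.SimplicialComplex ℝ E) (K' : Geometry.SimplicialComplex ℝ F)
    (h : K.space → K'.space) (g : L → L') (α : L → K.space) (α' : L' → K'.space) : Prop :=
  ∀ Δ ∈ K'.faces, ∀ z : L,
    ((h (α z) : F) ∈ convexHull ℝ (Δ : Set F)) → ((α' (g z) : F) ∈ convexHull ℝ (Δ : Set F))

/-!
Let `x` and `y = α z` lie in a common simplex `conv σ` of `K`, and let `w` be their midpoint. The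
least face `τ` of `K` whose simplex contains `w` is a face of `σ`, and `conv τ` is an extreme
subset of `conv σ`; since `w` lies in the open segment from `x` to `y`, both `x` and `y` lie in
`conv τ`. As `h` is combinatorial, `h w ∈ conv Δ` for a face `Δ` of `K'`, and `w` lies in a simplex
`conv ρ ⊆ h⁻¹(conv Δ)`; by leastness `τ ⊆ ρ`, so `h x, h y ∈ conv Δ`. Combinatorial commutation
then puts `α' (g z)` into `conv Δ` too, so it lies in the star of `h x`.
-/

section ConvexHull

open Finset

variable {𝕜 E : Type*} [Field 𝕜] [LinearOrder 𝕜] [IsStrictOrderedRing 𝕜] [AddCommGroup E]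
  [Module 𝕜 E]

lemma sum_smul_mem_convexHull_of_subset {σ τ : Finset E} (hτσ : τ ⊆ σ) {f : E → 𝕜}
    (hf₀ : ∀ i ∈ σ, 0 ≤ f i)
    (hf₁ : ∑ i ∈ σ, f i = 1) (hfτ : ∀ i ∈ σ, i ∉ τ → f i = 0) :
    ∑ i ∈ σ, f i • i ∈ convexHull 𝕜 (τ : Set E) := by
  rw [← sum_subset hτσ fun i hi hiτ ↦ by rw [hfτ i hi hiτ, zero_smul]]
  exact mem_convexHull'.2 ⟨f, fun i hi ↦ hf₀ i (hτσ hi), by rwa [sum_subset hτσ hfτ], rfl⟩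

theorem AffineIndependent.isExtreme_convexHull_of_subset {σ τ : Finset E}
    (hσ : AffineIndependent 𝕜 ((↑) : σ → E)) (hτσ : τ ⊆ σ) :
    IsExtreme 𝕜 (convexHull 𝕜 (σ : Set E)) (convexHull 𝕜 (τ : Set E)) := by
  classical
  refine ⟨convexHull_mono hτσ, ?_⟩
  rintro x hx y hy z hz ⟨a, b, ha, hb, hab, rfl⟩
  obtain ⟨f, hf₀, hf₁, rfl⟩ := mem_convexHull'.1 hx
  obtain ⟨g, hg₀, hg₁, rfl⟩ := mem_convexHull'.1 hy
  obtain ⟨c, -, hc₁, hcz⟩ := mem_convexHull'.1 hz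
  -- Both sides are barycentric coordinates of `z` in the simplex `σ`, hence they agree.
  have hweights : ∀ i ∈ σ, a * f i + b * g i = if i ∈ τ then c i else 0 := by
    refine hσ.eq_of_sum_eq_sum_subtype ?_ ?_
    · simp only [sum_add_distrib, ← mul_sum, hf₁, hg₁, sum_ite_mem, Finset.inter_eq_right.2 hτσ,
        hc₁]
      linarith
    · simp only [add_smul, mul_smul, sum_add_distrib, ← smul_sum, ite_smul, zero_smul,
        sum_ite_mem, Finset.inter_eq_right.2 hτσ, hcz]
  refine sum_smul_mem_convexHull_of_subset hτσ hf₀ hf₁ fun i hi hiτ ↦ ?_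
  have hzero := hweights i hi
  rw [if_neg hiτ] at hzero
  have hfg := (add_eq_zero_iff_of_nonneg (mul_nonneg ha.le (hf₀ i hi))
    (mul_nonneg hb.le (hg₀ i hi))).1 hzero
  exact (mul_eq_zero.1 hfg.1).resolve_left ha.ne'

end ConvexHull

namespace Geometry.SimplicialComplex

variable {𝕜 E : Type*} [Ring 𝕜] [PartialOrder 𝕜] [AddCommGroup E] [Module 𝕜 E]
  (K : SimplicialComplex 𝕜 E)

theorem exists_least_face_mem_convexHull {w : E} (hw : w ∈ K.space) :
    ∃ τ ∈ K.faces, w ∈ convexHull 𝕜 (τ : Set E) ∧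
      ∀ ρ ∈ K.faces, w ∈ convexHull 𝕜 (ρ : Set E) → τ ⊆ ρ := by
  classical
  obtain ⟨τ, hτmin⟩ := exists_minimal_of_wellFoundedLT
    (fun τ : Finset E ↦ τ ∈ K.faces ∧ w ∈ convexHull 𝕜 (τ : Set E)) (K.mem_space_iff.1 hw)
  obtain ⟨hτ, hwτ⟩ := hτmin.prop
  refine ⟨τ, hτ, hwτ, fun ρ hρ hwρ ↦ ?_⟩
  have hwτρ : w ∈ convexHull 𝕜 ((τ ∩ ρ : Finset E) : Set E) := by
    rw [Finset.coe_inter]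
    exact K.inter_subset_convexHull hτ hρ ⟨hwτ, hwρ⟩
  have hτρ : τ ∩ ρ ∈ K.faces :=
    K.down_closed hτ Finset.inter_subset_left
      (Finset.coe_nonempty.1 (convexHull_nonempty_iff.1 ⟨w, hwτρ⟩))
  exact (hτmin.le_of_le ⟨hτρ, hwτρ⟩ Finset.inter_subset_left).trans Finset.inter_subset_right

theorem mem_simplicialStar_iff [IsOrderedRing 𝕜] {x y : E} :
    y ∈ SimplicialStar K x ↔
      ∃ σ ∈ K.faces, x ∈ convexHull 𝕜 (σ : Set E) ∧ y ∈ convexHull 𝕜 (σ : Set E) := by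
  simp [SimplicialStar, and_assoc]

end Geometry.SimplicialComplex

namespace IsCombinatorialMap

variable {E F : Type*} [AddCommGroup E] [Module ℝ E] [AddCommGroup F] [Module ℝ F]
  {K : Geometry.SimplicialComplex ℝ E} {K' : Geometry.SimplicialComplex ℝ F}
  {h : K.space → K'.space}

theorem exists_face_mem_convexHull_mapsTo (hcomb : IsCombinatorialMap K K' h) (w : K.space) :
    ∃ ρ ∈ K.faces, ∃ Δ ∈ K'.faces, (w : E) ∈ convexHull ℝ (ρ : Set E) ∧
      ∀ p : K.space, (p : E) ∈ convexHull ℝ (ρ : Set E) → (h p : F) ∈ convexHull ℝ (Δ : Set F) := by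
  obtain ⟨Δ, hΔ, hwΔ⟩ := K'.mem_space_iff.1 (h w).2
  obtain ⟨S, hSK, hS⟩ := hcomb Δ hΔ
  have hw : (w : E) ∈ ⋃ σ ∈ S, convexHull ℝ (σ : Set E) := hS ▸ ⟨w.2, hwΔ⟩
  obtain ⟨ρ, hρS, hwρ⟩ := mem_iUnion₂.1 hw
  refine ⟨ρ, hSK hρS, Δ, hΔ, hwρ, fun p hp ↦ ?_⟩
  have hp' : (p : E) ∈ {x : E | ∃ hx : x ∈ K.space, (h ⟨x, hx⟩ : F) ∈ convexHull ℝ ↑Δ} :=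
    hS ▸ mem_iUnion₂.2 ⟨ρ, hρS, hp⟩
  exact hp'.2

theorem exists_face_mem_convexHull_pair (hcomb : IsCombinatorialMap K K' h) {σ : Finset E}
    (hσ : σ ∈ K.faces) (x y : K.space) (hx : (x : E) ∈ convexHull ℝ (σ : Set E))
    (hy : (y : E) ∈ convexHull ℝ (σ : Set E)) :
    ∃ Δ ∈ K'.faces,
      (h x : F) ∈ convexHull ℝ (Δ : Set F) ∧ (h y : F) ∈ convexHull ℝ (Δ : Set F) := by
  set w := midpoint ℝ (x : E) y
  have hwxy : w ∈ openSegment ℝ (x : E) y := midpoint_mem_openSegment _ _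
  have hwσ : w ∈ convexHull ℝ (σ : Set E) := (convex_convexHull ℝ _).openSegment_subset hx hy hwxy
  have hwK : w ∈ K.space := K.convexHull_subset_space hσ hwσ
  obtain ⟨τ, hτ, hwτ, hτmin⟩ := K.exists_least_face_mem_convexHull hwK
  obtain ⟨ρ, hρ, Δ, hΔ, hwρ, hρΔ⟩ := hcomb.exists_face_mem_convexHull_mapsTo ⟨w, hwK⟩
  have hτρ : convexHull ℝ (τ : Set E) ⊆ convexHull ℝ (ρ : Set E) :=
    convexHull_mono (Finset.coe_subset.2 (hτmin ρ hρ hwρ))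
  have hext := (K.indep hσ).isExtreme_convexHull_of_subset (hτmin σ hσ hwσ)
  exact ⟨Δ, hΔ, hρΔ x (hτρ (hext.left_mem_of_mem_openSegment hx hy hwτ hwxy)),
    hρΔ y (hτρ (hext.right_mem_of_mem_openSegment hx hy hwτ hwxy))⟩

end IsCombinatorialMap

theorem image_preimage_star_subset_general {E F L L' : Type*}
    [AddCommGroup E] [Module ℝ E]
    [AddCommGroup F] [Module ℝ F]
    (K : Geometry.SimplicialComplex ℝ E) (K' : Geometry.SimplicialComplex ℝ F)
    (h : K.space → K'.space) (g : L → L') (α : L → K.space) (α' : L' → K'.space)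
    (hcomm : CombinatoriallyCommute K K' h g α α')
    (hcomb : IsCombinatorialMap K K' h) :
    ∀ x : K.space, ∀ z : L,
      (α z : E) ∈ SimplicialStar K (x : E) →
        (α' (g z) : F) ∈ SimplicialStar K' (h x : F) := by
  intro x z hz
  obtain ⟨σ, hσ, hxσ, hzσ⟩ := K.mem_simplicialStar_iff.1 hz
  obtain ⟨Δ, hΔ, hxΔ, hzΔ⟩ := hcomb.exists_face_mem_convexHull_pair hσ x (α z) hxσ hzσ
  exact K'.mem_simplicialStar_iff.2 ⟨Δ, hΔ, hxΔ, hcomm Δ hΔ z hzΔ⟩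

/-- Proposition 2.3(iii), first inclusion: if `h, g, α, α'` combinatorially commute
and `h` is combinatorial, then `g(α⁻¹(st(x))) ⊆ α'⁻¹(st(h(x)))` for every `x ∈ |K|`. -/
theorem image_preimage_star_subset {E F L L' : Type*}
    [AddCommGroup E] [Module ℝ E] [TopologicalSpace E]
    [AddCommGroup F] [Module ℝ F] [TopologicalSpace F]
    [TopologicalSpace L] [TopologicalSpace L']
    (K : Geometry.SimplicialComplex ℝ E) (K' : Geometry.SimplicialComplex ℝ F)
    (h : K.space → K'.space) (g : L → L') (α : L → K.space) (α' : L' → K'.space)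
    (hh : Continuous h) (hg : Continuous g) (hα : Continuous α) (hα' : Continuous α')
    (hcomm : CombinatoriallyCommute K K' h g α α')
    (hcomb : IsCombinatorialMap K K' h) :
    ∀ x : K.space, ∀ z : L,
      (α z : E) ∈ SimplicialStar K (x : E) →
        (α' (g z) : F) ∈ SimplicialStar K' (h x : F) :=
  image_preimage_star_subset_general K K' h g α α' hcomm hcomb
end

section
/- Let K and K' be simplicial complexes (geometric simplicial complexes in real vector spaces) with polyhedra |K| and |K'|, let L and L' be topological spaces, and let h : |K| → |K'|, g : L → L', α : L → |K|, α' : L' → |K'| be continuous maps such that h, g, α, α' combinatorially commute and h is combinatorial. Then for every point z ∈ L one has h(st(α(z))) ⊆ st(α'(g(z))), where st denotes the star in K and in K' respectively. -/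
open Set

section Centroid

variable {R E : Type*} [Field R] [LinearOrder R] [IsStrictOrderedRing R]
  [AddCommGroup E] [Module R E]

theorem AffineIndependent.subset_of_centroid_mem_convexHull {σ s : Finset E}
    (hσ : AffineIndependent R ((↑) : σ → E)) (hs : s ⊆ σ)
    (hc : σ.centroid R id ∈ convexHull R (s : Set E)) : σ ⊆ s := by
  classical
  intro x hx
  obtain ⟨w, -, hw₁, hwc⟩ := Finset.mem_convexHull'.1 hc
  have hcard : (σ.card : R) ≠ 0 := by exact_mod_cast (Finset.card_pos.2 ⟨x, hx⟩).ne'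
  -- the barycentric weights of the centroid, minus those of its representation over `s`
  let v (y : E) : R := (σ.card : R)⁻¹ - if y ∈ s then w y else 0
  have hv₀ : ∑ y ∈ σ, v y = 0 := by
    simp only [v, Finset.sum_sub_distrib, ← Finset.sum_filter, Finset.filter_mem_eq_inter,
      Finset.inter_eq_right.2 hs, hw₁, Finset.sum_const, nsmul_eq_mul, mul_inv_cancel₀ hcard,
      sub_self]
  have hcentroid : σ.centroid R id = ∑ y ∈ σ, (σ.card : R)⁻¹ • y := by
    rw [σ.centroid_eq_centerMass ⟨x, hx⟩, Finset.centerMass_eq_of_sum_1 _ _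
      (σ.sum_centroidWeights_eq_one_of_nonempty R ⟨x, hx⟩)]
    simp only [Finset.centroidWeights_apply, id]
  have hv₁ : ∑ y ∈ σ, v y • y = 0 := by
    simp only [v, sub_smul, ite_smul, zero_smul, Finset.sum_sub_distrib, ← Finset.sum_filter,
      Finset.filter_mem_eq_inter, Finset.inter_eq_right.2 hs, hwc, hcentroid, sub_self]
  by_contra hxs
  have := hσ.eq_zero_of_sum_eq_zero_subtype hv₀ hv₁ x hx
  simp only [v, hxs, if_false, sub_zero, inv_eq_zero] at this
  exact hcard this

end Centroid

namespace Geometry.SimplicialComplex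

variable {𝕜 E : Type*} [Field 𝕜] [LinearOrder 𝕜] [IsStrictOrderedRing 𝕜]
  [AddCommGroup E] [Module 𝕜 E] {K : SimplicialComplex 𝕜 E}

theorem subset_of_centroid_mem_convexHull {σ τ : Finset E} (hσ : σ ∈ K.faces)
    (hτ : τ ∈ K.faces) (hc : σ.centroid 𝕜 id ∈ convexHull 𝕜 (τ : Set E)) : σ ⊆ τ := by
  classical
  have hc' : σ.centroid 𝕜 id ∈ convexHull 𝕜 ((σ ∩ τ : Finset E) : Set E) := by
    rw [Finset.coe_inter, ← convexHull_inter_convexHull hσ hτ]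
    exact ⟨σ.centroid_mem_convexHull (K.nonempty_of_mem_faces hσ), hc⟩
  exact ((K.indep hσ).subset_of_centroid_mem_convexHull Finset.inter_subset_left hc').trans
    Finset.inter_subset_right

end Geometry.SimplicialComplex

theorem mem_simplicialStar {𝕜 E : Type*} [Ring 𝕜] [PartialOrder 𝕜] [IsOrderedRing 𝕜]
    [AddCommGroup E] [Module 𝕜 E] {K : Geometry.SimplicialComplex 𝕜 E} {x y : E} :
    y ∈ SimplicialStar K x ↔
      ∃ σ ∈ K.faces, x ∈ convexHull 𝕜 (σ : Set E) ∧ y ∈ convexHull 𝕜 (σ : Set E) := by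
  simp only [SimplicialStar, mem_iUnion, mem_ofPred_eq, exists_prop, and_assoc]

theorem IsCombinatorialMap.exists_mapsTo_convexHull {E F : Type*} [AddCommGroup E] [Module ℝ E]
    [AddCommGroup F] [Module ℝ F] {K : Geometry.SimplicialComplex ℝ E}
    {K' : Geometry.SimplicialComplex ℝ F} {h : K.space → K'.space}
    (hcomb : IsCombinatorialMap K K' h) {σ : Finset E} (hσ : σ ∈ K.faces) :
    ∃ Δ ∈ K'.faces, MapsTo (fun x => (h x : F))
      ((↑) ⁻¹' convexHull ℝ (σ : Set E)) (convexHull ℝ (Δ : Set F)) := by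
  have hcK : σ.centroid ℝ id ∈ K.space :=
    K.convexHull_subset_space hσ (σ.centroid_mem_convexHull (K.nonempty_of_mem_faces hσ))
  obtain ⟨Δ, hΔ, hcΔ⟩ := K'.mem_space_iff.1 (h ⟨_, hcK⟩).2
  obtain ⟨S, hSK, hpreimage⟩ := hcomb Δ hΔ
  have hcS : σ.centroid ℝ id ∈ ⋃ τ ∈ S, convexHull ℝ (τ : Set E) := hpreimage ▸ ⟨hcK, hcΔ⟩
  obtain ⟨τ, hτS, hcτ⟩ := mem_iUnion₂.1 hcS
  have hστ := K.subset_of_centroid_mem_convexHull hσ (hSK hτS) hcτ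
  refine ⟨Δ, hΔ, fun x hx => ?_⟩
  have hxS : (x : E) ∈ ⋃ τ ∈ S, convexHull ℝ (τ : Set E) :=
    mem_iUnion₂.2 ⟨τ, hτS, convexHull_mono (Finset.coe_subset.2 hστ) hx⟩
  rw [← hpreimage] at hxS
  exact hxS.2

theorem image_star_subset_star_general {E F L L' : Type*}
    [AddCommGroup E] [Module ℝ E]
    [AddCommGroup F] [Module ℝ F]
    (K : Geometry.SimplicialComplex ℝ E) (K' : Geometry.SimplicialComplex ℝ F)
    (h : K.space → K'.space) (g : L → L') (α : L → K.space) (α' : L' → K'.space)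
    (hcomm : CombinatoriallyCommute K K' h g α α')
    (hcomb : IsCombinatorialMap K K' h) :
    ∀ z : L, ∀ y : K.space,
      (y : E) ∈ SimplicialStar K (α z : E) →
        (h y : F) ∈ SimplicialStar K' (α' (g z) : F) := by
  intro z y hy
  obtain ⟨σ, hσ, hασ, hyσ⟩ := mem_simplicialStar.1 hy
  obtain ⟨Δ, hΔ, hσΔ⟩ := hcomb.exists_mapsTo_convexHull hσ
  exact mem_simplicialStar.2 ⟨Δ, hΔ, hcomm Δ hΔ z (hσΔ hασ), hσΔ hyσ⟩

/-- Proposition 2.3(iii), second inclusion: if `h, g, α, α'` combinatorially commute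
and `h` is combinatorial, then `h(st(α(z))) ⊆ st(α'(g(z)))` for every `z ∈ L`. -/
theorem image_star_subset_star {E F L L' : Type*}
    [AddCommGroup E] [Module ℝ E] [TopologicalSpace E]
    [AddCommGroup F] [Module ℝ F] [TopologicalSpace F]
    [TopologicalSpace L] [TopologicalSpace L']
    (K : Geometry.SimplicialComplex ℝ E) (K' : Geometry.SimplicialComplex ℝ F)
    (h : K.space → K'.space) (g : L → L') (α : L → K.space) (α' : L' → K'.space)
    (hh : Continuous h) (hg : Continuous g) (hα : Continuous α) (hα' : Continuous α')
    (hcomm : CombinatoriallyCommute K K' h g α α')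
    (hcomb : IsCombinatorialMap K K' h) :
    ∀ z : L, ∀ y : K.space,
      (y : E) ∈ SimplicialStar K (α z : E) →
        (h y : F) ∈ SimplicialStar K' (α' (g z) : F) :=
  image_star_subset_star_general K K' h g α α' hcomm hcomb
end
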